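/- arXiv:2511.02214 — 3 statements merged into one kernel-verified Lean document; each statement's English description precedes it below -/
import Mathlib

section
/- In a bipartite graph G = (A, B, E) satisfying the strong Hall condition |N(S)| ≥ (1+ε)|S| for all S ⊆ A with ε > 0, for any matching M that does not saturate A, there exists an M-augmenting path of length O(log|A|/ε). -/
open Classical in
/-- Neighborhood of a finset of left vertices. -/
noncomputable def nbhdF {α β : Type*} [Fintype β] (E : α → β → Prop) (S : Finset α) :
    Finset β :=
  Finset.univ.filter (fun b => ∃ a ∈ S, E a b)

open Classical in
theorem mem_nbhdF {α β : Type*} [Fintype β] (E : α → β → Prop) (S : Finset α) (b : β) :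
    b ∈ nbhdF E S ↔ ∃ a ∈ S, E a b := by
  simp [nbhdF]

open Classical in
/-- Matched partner of a right vertex (junk value `a0` if unmatched). -/
noncomputable def partnerF {α β : Type*} (M : Finset (α × β)) (a0 : α) (b : β) : α :=
  if h : ∃ a, (a, b) ∈ M then h.choose else a0

theorem partnerF_mem {α β : Type*} (M : Finset (α × β)) (a0 : α) (b : β)
    (h : ∃ a, (a, b) ∈ M) : (partnerF M a0 b, b) ∈ M := by
  rw [partnerF, dif_pos h]
  exact h.choose_spec

open Classical in
/-- BFS layers of alternating reachability from unmatched left vertices. -/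
noncomputable def layerF {α β : Type*} [Fintype α] [Fintype β] [DecidableEq α] [DecidableEq β] (E : α → β → Prop)
    (M : Finset (α × β)) (a0 : α) : ℕ → Finset α
  | 0 => Finset.univ.filter (fun a => ∀ b, (a, b) ∉ M)
  | (k+1) => layerF E M a0 k ∪
      ((nbhdF E (layerF E M a0 k)).filter (fun b => ∃ a, (a, b) ∈ M)).image
        (partnerF M a0)

theorem layerF_subset_succ {α β : Type*} [Fintype α] [Fintype β] [DecidableEq α] [DecidableEq β] (E : α → β → Prop)
    (M : Finset (α × β)) (a0 : α) (k : ℕ) :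
    layerF E M a0 k ⊆ layerF E M a0 (k+1) := by
  rw [layerF]
  exact Finset.subset_union_left

/-- Extraction of an alternating path ending at a given vertex of a layer. -/
theorem path_extract {α β : Type*} [Fintype α] [Fintype β] [DecidableEq α] [DecidableEq β] (E : α → β → Prop)
    (M : Finset (α × β)) (a0 : α)
    (hM2 : ∀ p ∈ M, ∀ q ∈ M, p.2 = q.2 → p = q) :
    ∀ k : ℕ, ∀ a ∈ layerF E M a0 k,
      ∃ t ≤ k, ∃ (A : Fin (t+1) → α) (B : Fin t → β),
        Function.Injective A ∧
        (∀ i, A i ∈ layerF E M a0 k) ∧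
        A (Fin.last t) = a ∧
        (∀ b, (A 0, b) ∉ M) ∧
        (∀ i : Fin t,
          E (A i.castSucc) (B i) ∧ (A i.castSucc, B i) ∉ M ∧ (A i.succ, B i) ∈ M) := by
  classical
  intro k
  induction k with
  | zero =>
    intro a ha
    have ha' : ∀ b, (a, b) ∉ M := by
      rw [layerF] at ha
      simpa using ha
    exact ⟨0, le_refl 0, fun _ => a, Fin.elim0,
      fun i j _ => Fin.ext (by omega), fun i => ha, rfl, ha', fun i => i.elim0⟩
  | succ k ih =>
    intro a ha
    rw [layerF] at ha
    rcases Finset.mem_union.mp ha with ha' | ha'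
    · -- a was already in the previous layer
      obtain ⟨t, ht, A, B, hAinj, hAmem, hAlast, hA0, hedges⟩ := ih a ha'
      exact ⟨t, ht.trans (Nat.le_succ k), A, B, hAinj,
        fun i => layerF_subset_succ E M a0 k (hAmem i), hAlast, hA0, hedges⟩
    · -- a is the partner of some matched b' in the neighborhood of the previous layer
      by_cases hak : a ∈ layerF E M a0 k
      · obtain ⟨t, ht, A, B, hAinj, hAmem, hAlast, hA0, hedges⟩ := ih a hak
        exact ⟨t, ht.trans (Nat.le_succ k), A, B, hAinj,
          fun i => layerF_subset_succ E M a0 k (hAmem i), hAlast, hA0, hedges⟩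
      obtain ⟨b', hb', hpb'⟩ := Finset.mem_image.mp ha'
      rw [Finset.mem_filter] at hb'
      obtain ⟨hb'nbhd, hb'match⟩ := hb'
      have habM : (a, b') ∈ M := hpb' ▸ partnerF_mem M a0 b' hb'match
      obtain ⟨a'', ha''mem, ha''E⟩ := (mem_nbhdF E _ b').mp hb'nbhd
      obtain ⟨t, ht, A, B, hAinj, hAmem, hAlast, hA0, hedges⟩ := ih a'' ha''mem
      refine ⟨t + 1, Nat.succ_le_succ ht, Fin.snoc A a, Fin.snoc B b', ?_, ?_, ?_, ?_, ?_⟩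
      · -- injectivity of the extended A
        intro i j hij
        induction i using Fin.lastCases with
        | last =>
          induction j using Fin.lastCases with
          | last => rfl
          | cast j =>
            rw [Fin.snoc_last, Fin.snoc_castSucc] at hij
            exact absurd (hij ▸ hAmem j) hak
        | cast i =>
          induction j using Fin.lastCases with
          | last =>
            rw [Fin.snoc_last, Fin.snoc_castSucc] at hij
            exact absurd (hij ▸ hAmem i) hak
          | cast j =>
            rw [Fin.snoc_castSucc, Fin.snoc_castSucc] at hij
            exact congrArg Fin.castSucc (hAinj hij)
      · -- membership in the next layer
        intro i
        induction i using Fin.lastCases with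
        | last =>
          rw [Fin.snoc_last]
          rw [layerF]
          exact Finset.mem_union.mpr (Or.inr ha')
        | cast i =>
          rw [Fin.snoc_castSucc]
          exact layerF_subset_succ E M a0 k (hAmem i)
      · rw [Fin.snoc_last]
      · -- A 0 unmatched
        intro b
        have h0 : (Fin.snoc A a : Fin (t+2) → α) 0 = A 0 := by
          rw [← Fin.castSucc_zero, Fin.snoc_castSucc]
        rw [h0]
        exact hA0 b
      · -- edge conditions
        intro i
        induction i using Fin.lastCases with
        | last =>
          have h1 : (Fin.last t).castSucc = (Fin.last t).castSucc := rfl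
          have hcs : (Fin.snoc A a : Fin (t+2) → α) (Fin.last t).castSucc = a'' := by
            rw [Fin.snoc_castSucc, hAlast]
          have hsc : (Fin.snoc A a : Fin (t+2) → α) (Fin.last t).succ = a := by
            rw [Fin.succ_last, Fin.snoc_last]
          have hB : (Fin.snoc B b' : Fin (t+1) → β) (Fin.last t) = b' := Fin.snoc_last _ _
          rw [hcs, hsc, hB]
          refine ⟨ha''E, ?_, habM⟩
          intro hmem
          have := hM2 _ hmem _ habM rfl
          have : a'' = a := congrArg Prod.fst this
          exact hak (this ▸ ha''mem)
        | cast i =>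
          have hcs : (Fin.snoc A a : Fin (t+2) → α) i.castSucc.castSucc = A i.castSucc := by
            rw [Fin.snoc_castSucc]
          have hsc : (Fin.snoc A a : Fin (t+2) → α) i.castSucc.succ = A i.succ := by
            rw [Fin.succ_castSucc, Fin.snoc_castSucc]
          have hB : (Fin.snoc B b' : Fin (t+1) → β) i.castSucc = B i := Fin.snoc_castSucc _ _ _
          rw [hcs, hsc, hB]
          exact hedges i

/-- In a bipartite graph satisfying the strong Hall condition
`|N(S)| ≥ (1+ε)|S|`, any matching not saturating `A` admits an augmenting path
of length at most `2⌈log |A| / log (1+ε)⌉ + 1`. -/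
theorem stmt_1 {α β : Type*} [Fintype α] [Fintype β] [DecidableEq α] [DecidableEq β]
    (E : α → β → Prop) (ε : ℝ) (hε : 0 < ε)
    (hHall : ∀ S : Finset α,
      (1 + ε) * (S.card : ℝ) ≤
        (({b : β | ∃ a ∈ S, E a b}.ncard : ℕ) : ℝ))
    (M : Finset (α × β))
    (hME : ∀ p ∈ M, E p.1 p.2)
    (hM1 : ∀ p ∈ M, ∀ q ∈ M, p.1 = q.1 → p = q)
    (hM2 : ∀ p ∈ M, ∀ q ∈ M, p.2 = q.2 → p = q)
    (hunsat : ∃ a : α, ∀ b : β, (a, b) ∉ M) :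
    ∃ (t : ℕ) (a : Fin (t + 1) → α) (b : Fin (t + 1) → β),
      Function.Injective a ∧ Function.Injective b ∧
      (∀ bb : β, (a 0, bb) ∉ M) ∧
      (∀ aa : α, (aa, b (Fin.last t)) ∉ M) ∧
      (∀ i : Fin (t + 1), E (a i) (b i) ∧ (a i, b i) ∉ M) ∧
      (∀ i : Fin t, (a i.succ, b i.castSucc) ∈ M) ∧
      2 * t + 1 ≤ 2 * ⌈Real.logb (1 + ε) (Fintype.card α)⌉₊ + 1 := by
  classical
  obtain ⟨a0, ha0⟩ := hunsat
  set N := ⌈Real.logb (1 + ε) (Fintype.card α)⌉₊ with hN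
  set S := layerF E M a0 with hS
  -- Hall condition in terms of nbhdF
  have hall' : ∀ T : Finset α, (1 + ε) * (T.card : ℝ) ≤ ((nbhdF E T).card : ℝ) := by
    intro T
    have hset : {b : β | ∃ a ∈ T, E a b} = ↑(nbhdF E T) := by
      ext b; simp [mem_nbhdF]
    have := hHall T
    rwa [hset, Set.ncard_coe_finset] at this
  -- a0 is in layer 0
  have ha0S : a0 ∈ S 0 := by
    rw [hS, layerF]
    simp [ha0]
  -- Find k ≤ N and an unmatched b in the neighborhood of layer k
  have key : ∃ k ≤ N, ∃ b ∈ nbhdF E (S k), ∀ a', (a', b) ∉ M := by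
    by_contra hcon
    push_neg at hcon
    -- all neighborhoods up to N are fully matched, so layers grow geometrically
    have grow : ∀ k ≤ N, (1 + ε) * ((S k).card : ℝ) ≤ ((S (k+1)).card : ℝ) := by
      intro k hk
      have hmatched : ∀ b ∈ nbhdF E (S k), ∃ a, (a, b) ∈ M := by
        intro b hb
        obtain ⟨a', ha'⟩ := hcon k hk b hb
        exact ⟨a', ha'⟩
      have hfilter : (nbhdF E (S k)).filter (fun b => ∃ a, (a, b) ∈ M) = nbhdF E (S k) :=
        Finset.filter_true_of_mem hmatched
      have hinj : Set.InjOn (partnerF M a0) ↑(nbhdF E (S k)) := by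
        intro b1 hb1 b2 hb2 heq
        have h1 := partnerF_mem M a0 b1 (hmatched b1 hb1)
        have h2 := partnerF_mem M a0 b2 (hmatched b2 hb2)
        have := hM1 _ h1 _ h2 (by rw [heq])
        exact congrArg Prod.snd this
      have hcardim : ((nbhdF E (S k)).image (partnerF M a0)).card = (nbhdF E (S k)).card :=
        Finset.card_image_of_injOn hinj
      have hsub : (nbhdF E (S k)).image (partnerF M a0) ⊆ S (k+1) := by
        intro x hx
        rw [hS, layerF]
        refine Finset.mem_union.mpr (Or.inr ?_)
        obtain ⟨b, hb, hpb⟩ := Finset.mem_image.mp hx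
        exact Finset.mem_image.mpr ⟨b, Finset.mem_filter.mpr ⟨hb, hmatched b hb⟩, hpb⟩
      have hle : (nbhdF E (S k)).card ≤ (S (k+1)).card := by
        rw [← hcardim]
        exact Finset.card_le_card hsub
      calc (1 + ε) * ((S k).card : ℝ) ≤ ((nbhdF E (S k)).card : ℝ) := hall' (S k)
        _ ≤ ((S (k+1)).card : ℝ) := by exact_mod_cast hle
    have pow_le : ∀ k ≤ N + 1, (1 + ε) ^ k ≤ ((S k).card : ℝ) := by
      intro k
      induction k with
      | zero =>
        intro _
        have : 1 ≤ (S 0).card := Finset.card_pos.mpr ⟨a0, ha0S⟩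
        simpa using (by exact_mod_cast this : (1 : ℝ) ≤ ((S 0).card : ℝ))
      | succ k ihk =>
        intro hk
        have hk' : k ≤ N := Nat.lt_succ_iff.mp hk
        have h1 : (1 + ε) ^ k ≤ ((S k).card : ℝ) := ihk (hk'.trans (Nat.le_succ N))
        calc (1 + ε) ^ (k+1) = (1 + ε) * (1 + ε) ^ k := by ring
          _ ≤ (1 + ε) * ((S k).card : ℝ) := by
              have : (0 : ℝ) < 1 + ε := by linarith
              exact mul_le_mul_of_nonneg_left h1 this.le
          _ ≤ ((S (k+1)).card : ℝ) := grow k hk'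
    -- upper bound by card α
    have hcardle : ((S (N+1)).card : ℝ) ≤ (Fintype.card α : ℝ) := by
      exact_mod_cast Finset.card_le_univ (S (N+1))
    -- lower bound via logb
    have hαpos : (0 : ℝ) < Fintype.card α := by
      have : 0 < Fintype.card α := Fintype.card_pos_iff.mpr ⟨a0⟩
      exact_mod_cast this
    have hb1 : (1 : ℝ) < 1 + ε := by linarith
    have hlogle : (Fintype.card α : ℝ) ≤ (1 + ε) ^ N := by
      have h1 : (Fintype.card α : ℝ) = (1 + ε) ^ (Real.logb (1 + ε) (Fintype.card α)) :=
        (Real.rpow_logb (by linarith) (by linarith) hαpos).symm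
      have h2 : (1 + ε) ^ (Real.logb (1 + ε) (Fintype.card α)) ≤ (1 + ε) ^ ((N : ℕ) : ℝ) :=
        Real.rpow_le_rpow_of_exponent_le hb1.le (Nat.le_ceil _)
      rw [h1]
      calc (1 + ε) ^ (Real.logb (1 + ε) (Fintype.card α)) ≤ (1 + ε) ^ ((N : ℕ) : ℝ) := h2
        _ = (1 + ε) ^ N := Real.rpow_natCast _ N
    have hfinal : (Fintype.card α : ℝ) < (1 + ε) ^ (N + 1) := by
      calc (Fintype.card α : ℝ) < (1 + ε) * (Fintype.card α : ℝ) := by nlinarith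
        _ ≤ (1 + ε) * (1 + ε) ^ N := by
            exact mul_le_mul_of_nonneg_left hlogle (by linarith)
        _ = (1 + ε) ^ (N + 1) := by ring
    have := pow_le (N + 1) (le_refl _)
    linarith
  obtain ⟨k, hkN, bstar, hbstar, hbstar_unmatched⟩ := key
  obtain ⟨a', ha'mem, ha'E⟩ := (mem_nbhdF E _ bstar).mp hbstar
  obtain ⟨t, htk, A, B, hAinj, hAmem, hAlast, hA0, hedges⟩ :=
    path_extract E M a0 hM2 k a' ha'mem
  refine ⟨t, A, Fin.snoc B bstar, hAinj, ?_, hA0, ?_, ?_, ?_, ?_⟩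
  · -- injectivity of the b sequence
    intro i j hij
    induction i using Fin.lastCases with
    | last =>
      induction j using Fin.lastCases with
      | last => rfl
      | cast j =>
        rw [Fin.snoc_last, Fin.snoc_castSucc] at hij
        exact absurd (hij ▸ (hedges j).2.2) (hbstar_unmatched _)
    | cast i =>
      induction j using Fin.lastCases with
      | last =>
        rw [Fin.snoc_last, Fin.snoc_castSucc] at hij
        exact absurd (hij ▸ (hedges i).2.2) (hbstar_unmatched _)
      | cast j =>
        rw [Fin.snoc_castSucc, Fin.snoc_castSucc] at hij
        have h1 := (hedges i).2.2
        have h2 := (hedges j).2.2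
        have := hM1 _ h1 _ h2 (by
          have := hM2 _ h1 _ h2 (by rw [hij])
          exact congrArg Prod.fst this)
        have hsucc : A i.succ = A j.succ := by
          have := hM2 _ h1 _ h2 (by rw [hij])
          exact congrArg Prod.fst this
        have : i.succ = j.succ := hAinj hsucc
        exact congrArg Fin.castSucc (Fin.succ_injective _ this)
  · -- b last unmatched
    intro aa
    rw [Fin.snoc_last]
    exact hbstar_unmatched aa
  · -- edges
    intro i
    induction i using Fin.lastCases with
    | last =>
      rw [Fin.snoc_last, hAlast]
      exact ⟨ha'E, hbstar_unmatched a'⟩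
    | cast i =>
      rw [Fin.snoc_castSucc]
      exact ⟨(hedges i).1, (hedges i).2.1⟩
  · -- matching edges
    intro i
    rw [Fin.snoc_castSucc]
    exact (hedges i).2.2
  · -- length bound
    have : t ≤ N := htk.trans hkN
    omega
end

section
/- Let G be an n-vertex graph with conductance φ > 0 and minimum degree δ > 0, let C be a set of pairwise vertex-disjoint demand pairs, and let F be a set of edges with |F| ≤ φδ|C|/16. Then there exists a pair (s,t) ∈ C and a path from s to t in G \ F of length at most 18 log n / φ. -/
/-! Prune `F`: outside a set `P` of volume at most `8|F|/φ ≤ δ|C|/2` every two vertices are joined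
by a short path in `G \ F`. Since every vertex has degree at least `δ`, `|P| < |C|`, and as the
demand pairs are vertex-disjoint, a vertex set smaller than `C` cannot meet every pair. -/

namespace Finset

variable {α : Type*} [DecidableEq α] {C : Finset (α × α)} {P : Finset α}

theorem card_le_card_of_forall_pair_meets
    (hdisj : ∀ d ∈ C, ∀ d' ∈ C, d ≠ d' →
      d.1 ≠ d'.1 ∧ d.1 ≠ d'.2 ∧ d.2 ≠ d'.1 ∧ d.2 ≠ d'.2)
    (hmeet : ∀ d ∈ C, d.1 ∈ P ∨ d.2 ∈ P) :
    #C ≤ #P := by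
  refine card_le_card_of_injOn (fun d => if d.1 ∈ P then d.1 else d.2) ?_ ?_
  · intro d hd
    by_cases h : d.1 ∈ P
    · simp [h]
    · simpa [h] using (hmeet d hd).resolve_left h
  · intro d hd d' hd' heq
    by_contra hne
    obtain ⟨h11, h12, h21, h22⟩ := hdisj d hd d' hd' hne
    by_cases h : d.1 ∈ P <;> by_cases h' : d'.1 ∈ P <;> simp_all

theorem exists_pair_avoiding_of_card_lt
    (hdisj : ∀ d ∈ C, ∀ d' ∈ C, d ≠ d' →
      d.1 ≠ d'.1 ∧ d.1 ≠ d'.2 ∧ d.2 ≠ d'.1 ∧ d.2 ≠ d'.2)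
    (hlt : #P < #C) :
    ∃ d ∈ C, d.1 ∉ P ∧ d.2 ∉ P := by
  by_contra! h
  exact hlt.not_ge <| card_le_card_of_forall_pair_meets hdisj fun d hd =>
    or_iff_not_imp_left.2 (h d hd)

end Finset

theorem stmt_4_general {V : Type*} [Fintype V] (G : SimpleGraph V)
    [DecidableRel G.Adj]
    (φ δ : ℝ) (hφ : 0 < φ) (hδ : 0 < δ)
    (hdeg : ∀ v : V, δ ≤ (G.degree v : ℝ))
    (hprune : ∀ F' : Finset (Sym2 V), ∃ P : Finset V,
      (∑ u ∈ P, (G.degree u : ℝ)) ≤ 8 * F'.card / φ ∧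
      ∀ u v : V, u ∉ P → v ∉ P →
        ∃ p : (G.deleteEdges (↑F' : Set (Sym2 V))).Walk u v,
          (p.length : ℝ) ≤ 18 * Real.logb 2 (Fintype.card V) / φ)
    (C : Finset (V × V)) (hCne : C.Nonempty)
    (hCdisj : ∀ d ∈ C, ∀ d' ∈ C, d ≠ d' →
      d.1 ≠ d'.1 ∧ d.1 ≠ d'.2 ∧ d.2 ≠ d'.1 ∧ d.2 ≠ d'.2)
    (F : Finset (Sym2 V))
    (hF : (F.card : ℝ) ≤ φ * δ * C.card / 16) :
    ∃ d ∈ C, ∃ p : (G.deleteEdges (↑F : Set (Sym2 V))).Walk d.1 d.2,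
      (p.length : ℝ) ≤ 18 * Real.logb 2 (Fintype.card V) / φ := by
  classical
  obtain ⟨P, hvol, hwalk⟩ := hprune F
  have hC : (0 : ℝ) < C.card := by exact_mod_cast hCne.card_pos
  have hPC : (P.card : ℝ) * δ < C.card * δ :=
    calc (P.card : ℝ) * δ ≤ ∑ u ∈ P, (G.degree u : ℝ) := by
          simpa using P.card_nsmul_le_sum _ δ fun u _ => hdeg u
      _ ≤ 8 * F.card / φ := hvol
      _ ≤ δ * C.card / 2 := by rw [div_le_iff₀ hφ]; nlinarith
      _ < C.card * δ := by nlinarith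
  obtain ⟨d, hd, h1, h2⟩ := Finset.exists_pair_avoiding_of_card_lt hCdisj
    (by exact_mod_cast lt_of_mul_lt_mul_right hPC hδ.le)
  exact ⟨d, hd, hwalk d.1 d.2 h1 h2⟩

/-- In an expander with conductance `φ` and minimum degree `δ`, after deleting
at most `φδ|C|/16` edges, some vertex-disjoint demand pair of `C` remains
connected by a path of length at most `18 log n / φ`.  The expander pruning
theorem combined with the diameter bound on expanders is assumed as the
hypothesis `hprune`. -/
theorem stmt_4 {V : Type*} [Fintype V] [DecidableEq V] (G : SimpleGraph V)
    [DecidableRel G.Adj]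
    (φ δ : ℝ) (hφ : 0 < φ) (hδ : 0 < δ)
    (hdeg : ∀ v : V, δ ≤ (G.degree v : ℝ))
    (hprune : ∀ F' : Finset (Sym2 V), ∃ P : Finset V,
      (∑ u ∈ P, (G.degree u : ℝ)) ≤ 8 * F'.card / φ ∧
      ∀ u v : V, u ∉ P → v ∉ P →
        ∃ p : (G.deleteEdges (↑F' : Set (Sym2 V))).Walk u v,
          (p.length : ℝ) ≤ 18 * Real.logb 2 (Fintype.card V) / φ)
    (C : Finset (V × V)) (hCne : C.Nonempty)
    (hCpairs : ∀ d ∈ C, d.1 ≠ d.2)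
    (hCdisj : ∀ d ∈ C, ∀ d' ∈ C, d ≠ d' →
      d.1 ≠ d'.1 ∧ d.1 ≠ d'.2 ∧ d.2 ≠ d'.1 ∧ d.2 ≠ d'.2)
    (F : Finset (Sym2 V))
    (hF : (F.card : ℝ) ≤ φ * δ * C.card / 16) :
    ∃ d ∈ C, ∃ p : (G.deleteEdges (↑F : Set (Sym2 V))).Walk d.1 d.2,
      (p.length : ℝ) ≤ 18 * Real.logb 2 (Fintype.card V) / φ :=
  stmt_4_general G φ δ hφ hδ hdeg hprune C hCne hCdisj F hF
end

section
/- Let H = (A, B, E) be an r-bounded bipartite hypergraph satisfying the φ-strong Haxell condition with φ > 2r² . Then H has a perfect matching (a set of pairwise vertex-disjoint hyperedges covering every vertex of A). -/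
/-!
Haxell's alternating-tree argument. Given a matching of `X ⊆ A` and `a₀ ∈ A \ X`, grow a tree of
edges from `a₀`: every tree edge is blocked in `B` by matching edges, whose `A`-vertices join the
tree. If the tree has vertex set `S`, the `B`-parts of the tree edges and of their blockers number
at most `2r(|S| - 1) < φ|S|`, so by the Haxell condition some edge at `S` avoids all of them. If
that edge is blocked, only by new matching edges, it extends the tree. If it is free, it is
swapped into the matching; this may free the tree edge that was blocked there, which is swapped in
in turn, cascading towards `a₀`. The numbers of blockers of the tree edges, compared
lexicographically from the oldest edge, decrease at every step, so eventually `a₀` is matched.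
-/

open Finset

namespace HaxellMatching

/-- Reading `ds` as base-`K` digits with the head least significant, `potential K N ds - 1` is
that number shifted up by `N - ds.length` places and padded below with digits `K - 1`. So it drops
when a digit `< K - 1` is pushed onto `ds`, or when `ds` is cut back to a suffix whose first digit
decreases. -/
def potential (K N : ℕ) (ds : List ℕ) : ℕ :=
  (Nat.ofDigits K ds + 1) * K ^ (N - ds.length)

lemma potential_cons_lt {K N c : ℕ} {ds : List ℕ} (hc : c + 1 < K) (hlen : ds.length < N) :
    potential K N (c :: ds) < potential K N ds := by
  obtain ⟨u, hu⟩ : ∃ u, N - ds.length = u + 1 := ⟨N - ds.length - 1, by omega⟩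
  have hpos : 0 < K ^ u := pow_pos (by omega) u
  have hlt : c + K * Nat.ofDigits K ds + 1 < (Nat.ofDigits K ds + 1) * K := by nlinarith
  calc potential K N (c :: ds) = (c + K * Nat.ofDigits K ds + 1) * K ^ u := by
        simp only [potential, Nat.ofDigits_cons, List.length_cons]; congr 2; omega
    _ < (Nat.ofDigits K ds + 1) * K * K ^ u := Nat.mul_lt_mul_of_pos_right hlt hpos
    _ = potential K N ds := by rw [potential, hu, pow_succ']; ring

lemma potential_append_cons_lt {K N c c' : ℕ} {ds₁ ds₂ : List ℕ} (hK : 0 < K) (hc : c' < c)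
    (hlen : (ds₁ ++ c :: ds₂).length ≤ N) :
    potential K N (c' :: ds₂) < potential K N (ds₁ ++ c :: ds₂) := by
  set u := N - (ds₁ ++ c :: ds₂).length
  have hexp : N - (c' :: ds₂).length = ds₁.length + u := by
    simp only [u, List.length_append, List.length_cons] at hlen ⊢
    omega
  have hpos : 0 < K ^ u := pow_pos hK u
  have hle : c' + K * Nat.ofDigits K ds₂ + 1 ≤ c + K * Nat.ofDigits K ds₂ := by omega
  calc potential K N (c' :: ds₂)
      = (c' + K * Nat.ofDigits K ds₂ + 1) * K ^ ds₁.length * K ^ u := by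
        rw [potential, hexp, pow_add, Nat.ofDigits_cons, mul_assoc]
    _ ≤ K ^ ds₁.length * (c + K * Nat.ofDigits K ds₂) * K ^ u := by
        rw [mul_comm _ (K ^ ds₁.length)]
        gcongr
    _ < (Nat.ofDigits K ds₁ + K ^ ds₁.length * (c + K * Nat.ofDigits K ds₂) + 1) * K ^ u := by
        gcongr; omega
    _ = potential K N (ds₁ ++ c :: ds₂) := by
        rw [potential, Nat.ofDigits_append, Nat.ofDigits_cons]

lemma card_le_card_of_pairwiseDisjoint_of_inter_nonempty {α : Type*} [DecidableEq α]
    {N : Finset (Finset α)} (hN : (N : Set (Finset α)).PairwiseDisjoint id) {t : Finset α}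
    (h : ∀ m ∈ N, (m ∩ t).Nonempty) : N.card ≤ t.card := by
  refine card_le_card_of_forall_subsingleton (fun m x => x ∈ m) (fun m hm => ?_) ?_
  · obtain ⟨x, hx⟩ := h m hm
    exact ⟨x, (mem_inter.1 hx).2, (mem_inter.1 hx).1⟩
  · intro x _ m hm m' hm'
    by_contra hne
    exact disjoint_left.1 (hN hm.1 hm'.1 hne) hm.2 hm'.2

variable {V : Type*} [DecidableEq V]

structure IsBoundedBipartite (A B : Finset V) (E : Finset (Finset V)) (r : ℕ) : Prop where
  subset_union : ∀ e ∈ E, e ⊆ A ∪ B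
  card_inter_left : ∀ e ∈ E, (e ∩ A).card = 1
  card_inter_right_le : ∀ e ∈ E, (e ∩ B).card ≤ r

def IsStrongHaxell (A B : Finset V) (E : Finset (Finset V)) (φ : ℝ) : Prop :=
  ∀ S ⊆ A, ∀ T ⊆ B, (∀ e ∈ E, (e ∩ S).Nonempty → (e ∩ T).Nonempty) → φ * S.card ≤ T.card

structure IsMatchingOn (A X : Finset V) (E M : Finset (Finset V)) : Prop where
  subset : M ⊆ E
  pairwiseDisjoint : (M : Set (Finset V)).PairwiseDisjoint id
  covers : ∀ a ∈ X, ∃ m ∈ M, a ∈ m ∩ A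
  inter_left_subset : ∀ m ∈ M, m ∩ A ⊆ X

def blockers (B : Finset V) (M : Finset (Finset V)) (f : Finset V) : Finset (Finset V) :=
  M.filter fun m => ¬Disjoint (f ∩ B) (m ∩ B)

def blockerVerts (A B : Finset V) (M : Finset (Finset V)) (f : Finset V) : Finset V :=
  (blockers B M f).biUnion (· ∩ A)

def blockedVerts (A B : Finset V) (M : Finset (Finset V)) (L : List (Finset V)) : Finset V :=
  L.toFinset.biUnion (blockerVerts A B M)

def treeCover (B : Finset V) (M : Finset (Finset V)) (L : List (Finset V)) : Finset V :=
  L.toFinset.biUnion fun f => f ∩ B ∪ (blockers B M f).biUnion (· ∩ B)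

def blockerCounts (B : Finset V) (M : Finset (Finset V)) (L : List (Finset V)) : List ℕ :=
  L.map fun f => (blockers B M f).card

section Matching

variable {A B X : Finset V} {E M : Finset (Finset V)} {r : ℕ} {a : V} {e f m : Finset V}

lemma IsBoundedBipartite.exists_inter_left_eq (hE : IsBoundedBipartite A B E r) (he : e ∈ E) :
    ∃ a, e ∩ A = {a} :=
  card_eq_one.1 (hE.card_inter_left e he)

lemma IsBoundedBipartite.disjoint_of_blockers_eq_empty (hE : IsBoundedBipartite A B E r)
    (he : e ∈ E) (hfree : blockers B M e = ∅) (hm : m ∈ M) (hA : Disjoint (e ∩ A) m) :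
    Disjoint e m := by
  rw [disjoint_left]
  intro x hxe hxm
  rcases mem_union.1 (hE.subset_union e he hxe) with hxA | hxB
  · exact disjoint_left.1 hA (mem_inter.2 ⟨hxe, hxA⟩) hxm
  · have hblock : m ∈ blockers B M e :=
      mem_filter.2 ⟨hm, not_disjoint_iff.2 ⟨x, mem_inter.2 ⟨hxe, hxB⟩, mem_inter.2 ⟨hxm, hxB⟩⟩⟩
    simp [hfree] at hblock

lemma IsMatchingOn.extend (hE : IsBoundedBipartite A B E r) (hM : IsMatchingOn A X E M)
    (ha : a ∉ X) (he : e ∈ E) (hea : e ∩ A = {a}) (hfree : blockers B M e = ∅) :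
    IsMatchingOn A (insert a X) E (insert e M) where
  subset := insert_subset he hM.subset
  pairwiseDisjoint := by
    rw [coe_insert]
    refine hM.pairwiseDisjoint.insert fun m hm _ => ?_
    show Disjoint e m
    refine hE.disjoint_of_blockers_eq_empty he hfree hm ?_
    rw [hea, disjoint_singleton_left]
    exact fun ham => ha (hM.inter_left_subset m hm (mem_inter.2 ⟨ham, mem_of_mem_inter_right
      (hea ▸ mem_singleton_self a)⟩))
  covers x hx := by
    rcases mem_insert.1 hx with rfl | hx
    · exact ⟨e, mem_insert_self e M, hea ▸ mem_singleton_self x⟩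
    · obtain ⟨m, hm, hxm⟩ := hM.covers x hx
      exact ⟨m, mem_insert_of_mem hm, hxm⟩
  inter_left_subset m hm := by
    rcases mem_insert.1 hm with rfl | hm
    · rw [hea]
      exact singleton_subset_iff.2 (mem_insert_self a X)
    · exact (hM.inter_left_subset m hm).trans (subset_insert a X)

lemma IsMatchingOn.swap (hE : IsBoundedBipartite A B E r) (hM : IsMatchingOn A X E M)
    (hm : m ∈ M) (hma : m ∩ A = {a}) (he : e ∈ E) (hea : e ∩ A = {a})
    (hfree : blockers B M e = ∅) :
    IsMatchingOn A X E (insert e (M.erase m)) where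
  subset := insert_subset he ((erase_subset m M).trans hM.subset)
  pairwiseDisjoint := by
    rw [coe_insert, coe_erase]
    refine (hM.pairwiseDisjoint.subset Set.sdiff_subset).insert fun m' hm' _ => ?_
    show Disjoint e m'
    refine hE.disjoint_of_blockers_eq_empty he hfree hm'.1 ?_
    rw [hea, disjoint_singleton_left]
    intro ham'
    refine hm'.2 (Set.mem_singleton_iff.2 ?_)
    by_contra hne
    exact disjoint_left.1 (hM.pairwiseDisjoint hm'.1 hm hne) ham'
      (mem_of_mem_inter_left (hma ▸ mem_singleton_self a))
  covers x hx := by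
    obtain ⟨m', hm', hxm'⟩ := hM.covers x hx
    by_cases h : m' = m
    · subst h
      exact ⟨e, mem_insert_self _ _, hea ▸ hma ▸ hxm'⟩
    · exact ⟨m', mem_insert_of_mem (mem_erase.2 ⟨h, hm'⟩), hxm'⟩
  inter_left_subset m' hm' := by
    rcases mem_insert.1 hm' with rfl | hm'
    · rw [hea, ← hma]
      exact hM.inter_left_subset m hm
    · exact hM.inter_left_subset m' (mem_of_mem_erase hm')

lemma blockers_swap {g : Finset V} (hg : Disjoint (g ∩ B) (e ∩ B)) :
    blockers B (insert e (M.erase m)) g = (blockers B M g).erase m := by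
  simp [blockers, filter_insert, hg, filter_erase]

lemma IsMatchingOn.card_blockers_le (hM : IsMatchingOn A X E M) :
    (blockers B M f).card ≤ (f ∩ B).card := by
  refine card_le_card_of_pairwiseDisjoint_of_inter_nonempty
    (hM.pairwiseDisjoint.subset (coe_subset.2 (filter_subset _ M))) fun m hm => ?_
  obtain ⟨x, hxf, hxm⟩ := not_disjoint_iff.1 (mem_filter.1 hm).2
  exact ⟨x, mem_inter.2 ⟨mem_of_mem_inter_left hxm, hxf⟩⟩

lemma IsMatchingOn.card_blockers_le_card_blockerVerts (hE : IsBoundedBipartite A B E r)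
    (hM : IsMatchingOn A X E M) : (blockers B M f).card ≤ (blockerVerts A B M f).card := by
  refine card_le_card_of_pairwiseDisjoint_of_inter_nonempty
    (hM.pairwiseDisjoint.subset (coe_subset.2 (filter_subset _ M))) fun m hm => ?_
  obtain ⟨x, hmx⟩ := hE.exists_inter_left_eq (hM.subset (mem_filter.1 hm).1)
  have hx : x ∈ m ∩ A := hmx ▸ mem_singleton_self x
  exact ⟨x, mem_inter.2 ⟨mem_of_mem_inter_left hx, mem_biUnion.2 ⟨m, hm, hx⟩⟩⟩

end Matching

/-- Haxell's alternating tree rooted at `a₀`, listed newest edge first. -/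
inductive IsAltTree (a₀ : V) (A B : Finset V) (E M : Finset (Finset V)) :
    List (Finset V) → Prop
  | nil : IsAltTree a₀ A B E M []
  | cons {f : Finset V} {l : List (Finset V)} : IsAltTree a₀ A B E M l → f ∈ E →
      (∀ g ∈ l, Disjoint (f ∩ B) (g ∩ B)) → (blockers B M f).Nonempty →
      Disjoint (blockerVerts A B M f) (blockedVerts A B M l) →
      f ∩ A ⊆ insert a₀ (blockedVerts A B M l) → IsAltTree a₀ A B E M (f :: l)

section AltTree

variable {a₀ : V} {A B X : Finset V} {E M M' : Finset (Finset V)} {r : ℕ} {f : Finset V}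
  {L : List (Finset V)}

lemma blockedVerts_cons :
    blockedVerts A B M (f :: L) = blockerVerts A B M f ∪ blockedVerts A B M L := by
  simp [blockedVerts, biUnion_insert]

lemma treeCover_cons :
    treeCover B M (f :: L) = (f ∩ B ∪ (blockers B M f).biUnion (· ∩ B)) ∪ treeCover B M L := by
  simp [treeCover, biUnion_insert]

lemma IsMatchingOn.blockedVerts_subset (hM : IsMatchingOn A X E M) :
    blockedVerts A B M L ⊆ X := by
  intro x hx
  simp only [blockedVerts, blockerVerts, mem_biUnion] at hx
  obtain ⟨f, -, m, hm, hxm⟩ := hx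
  exact hM.inter_left_subset m (mem_filter.1 hm).1 hxm

lemma blockedVerts_congr (h : ∀ f ∈ L, blockers B M' f = blockers B M f) :
    blockedVerts A B M' L = blockedVerts A B M L :=
  biUnion_congr rfl fun f hf => by rw [blockerVerts, blockerVerts, h f (List.mem_toFinset.1 hf)]

lemma IsAltTree.congr (ht : IsAltTree a₀ A B E M L)
    (h : ∀ f ∈ L, blockers B M' f = blockers B M f) : IsAltTree a₀ A B E M' L := by
  induction ht with
  | nil => exact .nil
  | @cons f l _ hfE hfB hne hdisj hroot ih =>
    have hl : ∀ g ∈ l, blockers B M' g = blockers B M g := fun g hg => h g (by simp [hg])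
    have hf : blockers B M' f = blockers B M f := h f (by simp)
    refine .cons (ih hl) hfE hfB (hf ▸ hne) ?_ ?_ <;> rw [blockedVerts_congr hl]
    · rwa [blockerVerts, hf]
    · exact hroot

lemma IsAltTree.of_append {l₁ : List (Finset V)} (ht : IsAltTree a₀ A B E M (l₁ ++ L)) :
    IsAltTree a₀ A B E M L := by
  induction l₁ with
  | nil => exact ht
  | cons f l ih => cases ht with | cons ht => exact ih ht

lemma IsAltTree.length_le_card_blockedVerts (hE : IsBoundedBipartite A B E r)
    (hM : IsMatchingOn A X E M) (ht : IsAltTree a₀ A B E M L) :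
    L.length ≤ (blockedVerts A B M L).card := by
  induction ht with
  | nil => simp
  | @cons f l _ _ _ hne hdisj _ ih =>
    rw [blockedVerts_cons, card_union_of_disjoint hdisj, List.length_cons]
    have := (card_pos.2 hne).trans_le (hM.card_blockers_le_card_blockerVerts hE (f := f))
    omega

lemma IsAltTree.card_treeCover_le (hE : IsBoundedBipartite A B E r)
    (hM : IsMatchingOn A X E M) (ht : IsAltTree a₀ A B E M L) :
    (treeCover B M L).card ≤ 2 * r * (blockedVerts A B M L).card := by
  induction ht with
  | nil => simp [treeCover]
  | @cons f l _ hfE _ hne hdisj _ ih =>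
    have hf : (f ∩ B).card ≤ r * (blockers B M f).card :=
      (hE.card_inter_right_le f hfE).trans (Nat.le_mul_of_pos_right r (card_pos.2 hne))
    have hbl : ((blockers B M f).biUnion (· ∩ B)).card ≤ r * (blockers B M f).card := by
      rw [mul_comm]
      exact card_biUnion_le_card_mul _ _ r fun m hm =>
        hE.card_inter_right_le m (hM.subset (mem_filter.1 hm).1)
    have hv := hM.card_blockers_le_card_blockerVerts hE (f := f)
    rw [treeCover_cons, blockedVerts_cons, card_union_of_disjoint hdisj]
    calc _ ≤ (f ∩ B).card + ((blockers B M f).biUnion (· ∩ B)).card + (treeCover B M l).card :=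
          (card_union_le _ _).trans (Nat.add_le_add_right (card_union_le _ _) _)
      _ ≤ 2 * r * (blockerVerts A B M f).card + 2 * r * (blockedVerts A B M l).card := by
          have := Nat.mul_le_mul_left r hv
          linarith
      _ = _ := by ring

end AltTree

def IsPruning (B : Finset V) (M M' : Finset (Finset V)) (L L' : List (Finset V)) : Prop :=
  ∃ l₁ f l₂, L = l₁ ++ f :: l₂ ∧ L' = f :: l₂ ∧
    (blockers B M' f).card < (blockers B M f).card ∧ ∀ g ∈ l₂, blockers B M' g = blockers B M g

section Augmentation

variable {a₀ a : V} {A B X : Finset V} {E M M' : Finset (Finset V)} {r : ℕ} {φ : ℝ}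
  {e f : Finset V} {l L L' : List (Finset V)}

lemma IsPruning.potential_lt {K N : ℕ} (h : IsPruning B M M' L L') (hK : 0 < K)
    (hlen : L.length ≤ N) :
    potential K N (blockerCounts B M' L') < potential K N (blockerCounts B M L) := by
  obtain ⟨l₁, f, l₂, rfl, rfl, hlt, hsame⟩ := h
  have hl₂ : blockerCounts B M' l₂ = blockerCounts B M l₂ :=
    List.map_congr_left fun g hg => by rw [hsame g hg]
  simp only [blockerCounts, List.map_append, List.map_cons] at hl₂ ⊢
  rw [hl₂]
  exact potential_append_cons_lt hK hlt (by simpa using hlen)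

lemma IsPruning.append_cons {M'' : Finset (Finset V)} {l₁ : List (Finset V)}
    (h : IsPruning B M' M'' l L') (hsame : ∀ g ∈ l, blockers B M' g = blockers B M g) :
    IsPruning B M M'' (l₁ ++ f :: l) L' := by
  obtain ⟨k₁, g, k₂, rfl, rfl, hlt, hk⟩ := h
  refine ⟨l₁ ++ f :: k₁, g, k₂, by simp, rfl, ?_, fun g' hg' => ?_⟩
  · rwa [← hsame g (by simp)]
  · rw [hk g' hg', hsame g' (by simp [hg'])]

lemma blockedVerts_subset_left : blockedVerts A B M L ⊆ A :=
  biUnion_subset.2 fun _ _ => biUnion_subset.2 fun _ _ => inter_subset_right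

lemma treeCover_subset_right : treeCover B M L ⊆ B :=
  biUnion_subset.2 fun _ _ => union_subset inter_subset_right
    (biUnion_subset.2 fun _ _ => inter_subset_right)

lemma inter_right_subset_treeCover (hf : f ∈ L) : f ∩ B ⊆ treeCover B M L :=
  fun _ hx => mem_biUnion.2 ⟨f, List.mem_toFinset.2 hf, mem_union_left _ hx⟩

lemma IsMatchingOn.disjoint_blockerVerts_of_disjoint_treeCover (hM : IsMatchingOn A X E M)
    (heT : Disjoint e (treeCover B M L)) :
    Disjoint (blockerVerts A B M e) (blockedVerts A B M L) := by
  rw [disjoint_left]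
  intro x hxe hxL
  simp only [blockerVerts, blockedVerts, mem_biUnion, List.mem_toFinset] at hxe hxL
  obtain ⟨m, hm, hxm⟩ := hxe
  obtain ⟨g, hg, m', hm', hxm'⟩ := hxL
  obtain rfl : m = m' := by
    by_contra hne
    exact disjoint_left.1 (hM.pairwiseDisjoint (mem_filter.1 hm).1 (mem_filter.1 hm').1 hne)
      (mem_of_mem_inter_left hxm) (mem_of_mem_inter_left hxm')
  obtain ⟨y, hye, hym⟩ := not_disjoint_iff.1 (mem_filter.1 hm).2
  refine disjoint_left.1 heT (mem_of_mem_inter_left hye) ?_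
  simp only [treeCover, mem_biUnion, List.mem_toFinset, mem_union]
  exact ⟨g, hg, .inr ⟨m, hm', hym⟩⟩

lemma IsAltTree.exists_uncovered (hE : IsBoundedBipartite A B E r) (hH : IsStrongHaxell A B E φ)
    (hφ : 2 * (r : ℝ) ^ 2 < φ) (ha₀ : a₀ ∈ A) (ha₀X : a₀ ∉ X) (hM : IsMatchingOn A X E M)
    (ht : IsAltTree a₀ A B E M L) :
    ∃ e ∈ E, (e ∩ insert a₀ (blockedVerts A B M L)).Nonempty ∧ Disjoint e (treeCover B M L) := by
  by_contra! hcov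
  have hHax := hH _ (insert_subset ha₀ blockedVerts_subset_left) _ treeCover_subset_right
    fun e he hne => not_disjoint_iff_nonempty_inter.1 (hcov e he hne)
  rw [card_insert_of_notMem fun h => ha₀X (hM.blockedVerts_subset h)] at hHax
  have hT : ((treeCover B M L).card : ℝ) ≤ 2 * r * (blockedVerts A B M L).card := by
    exact_mod_cast ht.card_treeCover_le hE hM
  have hr : (r : ℝ) ≤ r ^ 2 := by exact_mod_cast Nat.le_self_pow two_ne_zero r
  have hc : (0 : ℝ) ≤ (blockedVerts A B M L).card := Nat.cast_nonneg _
  push_cast at hHax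
  nlinarith

lemma IsAltTree.exists_swap (hE : IsBoundedBipartite A B E r) (hM : IsMatchingOn A X E M)
    (ht : IsAltTree a₀ A B E M (f :: l)) (he : e ∈ E) (hea : e ∩ A = {a})
    (haf : a ∈ blockerVerts A B M f) (hfree : blockers B M e = ∅)
    (heB : ∀ g ∈ f :: l, Disjoint (e ∩ B) (g ∩ B)) :
    ∃ M', IsMatchingOn A X E M' ∧ blockers B M' f ⊂ blockers B M f ∧
      ∀ g ∈ l, blockers B M' g = blockers B M g := by
  obtain ⟨m, hm, ham⟩ := mem_biUnion.1 haf
  have hma : m ∩ A = {a} := by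
    obtain ⟨b, hb⟩ := hE.exists_inter_left_eq (hM.subset (mem_filter.1 hm).1)
    rw [hb] at ham ⊢
    rw [mem_singleton.1 ham]
  refine ⟨_, hM.swap hE (mem_filter.1 hm).1 hma he hea hfree, ?_, fun g hg => ?_⟩
  · rw [blockers_swap (heB f (by simp)).symm]
    exact erase_ssubset hm
  · cases ht with | cons _ _ _ _ hdisj =>
    rw [blockers_swap (heB g (by simp [hg])).symm]
    refine erase_eq_of_notMem fun hmg => disjoint_left.1 hdisj haf ?_
    exact mem_biUnion.2 ⟨g, List.mem_toFinset.2 hg, mem_biUnion.2 ⟨m, hmg, ham⟩⟩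

lemma IsAltTree.cons_of_blockers_subset (ht : IsAltTree a₀ A B E M (f :: l))
    (ht' : IsAltTree a₀ A B E M' l) (hsame : ∀ g ∈ l, blockers B M' g = blockers B M g)
    (hsub : blockers B M' f ⊆ blockers B M f) (hne : (blockers B M' f).Nonempty) :
    IsAltTree a₀ A B E M' (f :: l) := by
  cases ht with | cons _ hfE hfB _ hdisj hroot =>
  refine .cons ht' hfE hfB hne ?_ ?_ <;> rw [blockedVerts_congr hsame]
  · exact hdisj.mono_left (biUnion_subset_biUnion_of_subset_left _ hsub)
  · exact hroot

lemma IsAltTree.cascade (hE : IsBoundedBipartite A B E r) (ha₀X : a₀ ∉ X)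
    (hM : IsMatchingOn A X E M) (ht : IsAltTree a₀ A B E M L) (he : e ∈ E) (hea : e ∩ A = {a})
    (ha : a ∈ insert a₀ (blockedVerts A B M L)) (hfree : blockers B M e = ∅)
    (heB : ∀ g ∈ L, Disjoint (e ∩ B) (g ∩ B)) :
    (∃ M', IsMatchingOn A (insert a₀ X) E M') ∨
      ∃ M' L', IsMatchingOn A X E M' ∧ IsAltTree a₀ A B E M' L' ∧ IsPruning B M M' L L' := by
  induction hn : L.length using Nat.strong_induction_on generalizing L M e a with
  | _ n ih =>
  rcases mem_insert.1 ha with rfl | ha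
  · exact .inl ⟨_, hM.extend hE ha₀X he hea hfree⟩
  obtain ⟨f, hfL, haf⟩ : ∃ f ∈ L, a ∈ blockerVerts A B M f := by simpa [blockedVerts] using ha
  obtain ⟨l₁, l₂, rfl⟩ := List.append_of_mem hfL
  have htf := ht.of_append
  obtain ⟨M', hM', hsub, hsame⟩ :=
    htf.exists_swap hE hM he hea haf hfree fun g hg => heB g (by simp [hg])
  have ht' := (htf.of_append (l₁ := [f])).congr hsame
  by_cases hne : (blockers B M' f).Nonempty
  · exact .inr ⟨M', f :: l₂, hM', htf.cons_of_blockers_subset ht' hsame hsub.subset hne,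
      l₁, f, l₂, rfl, rfl, card_lt_card hsub, hsame⟩
  cases htf with | cons _ hfE hfB _ _ hroot =>
  obtain ⟨a', hfa'⟩ := hE.exists_inter_left_eq hfE
  have ha' : a' ∈ insert a₀ (blockedVerts A B M' l₂) := by
    rw [blockedVerts_congr hsame]
    exact hroot (hfa' ▸ mem_singleton_self a')
  rcases ih l₂.length (by rw [← hn, List.length_append, List.length_cons]; omega) hM' ht' hfE hfa' ha' (not_nonempty_iff_eq_empty.1 hne)
      hfB rfl with hdone | ⟨M'', L'', hM'', ht'', hprune⟩
  · exact .inl hdone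
  · exact .inr ⟨M'', L'', hM'', ht'', hprune.append_cons hsame⟩

lemma IsAltTree.exists_matching_or_potential_lt (hE : IsBoundedBipartite A B E r)
    (hH : IsStrongHaxell A B E φ) (hφ : 2 * (r : ℝ) ^ 2 < φ) (ha₀ : a₀ ∈ A) (ha₀X : a₀ ∉ X)
    (hM : IsMatchingOn A X E M) (ht : IsAltTree a₀ A B E M L) :
    (∃ M', IsMatchingOn A (insert a₀ X) E M') ∨
      ∃ M' L', IsMatchingOn A X E M' ∧ IsAltTree a₀ A B E M' L' ∧
        potential (r + 2) X.card (blockerCounts B M' L') <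
          potential (r + 2) X.card (blockerCounts B M L) := by
  have hlen {M' L'} (hM' : IsMatchingOn A X E M') (ht' : IsAltTree a₀ A B E M' L') :
      L'.length ≤ X.card :=
    (ht'.length_le_card_blockedVerts hE hM').trans (card_le_card hM'.blockedVerts_subset)
  obtain ⟨e, he, heS, heT⟩ := ht.exists_uncovered hE hH hφ ha₀ ha₀X hM
  obtain ⟨a, hea⟩ := hE.exists_inter_left_eq he
  have ha : a ∈ insert a₀ (blockedVerts A B M L) := by
    obtain ⟨x, hx⟩ := heS
    have hxa : x ∈ e ∩ A := mem_inter.2 ⟨mem_of_mem_inter_left hx,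
      insert_subset ha₀ blockedVerts_subset_left (mem_of_mem_inter_right hx)⟩
    rw [hea, mem_singleton] at hxa
    exact hxa ▸ mem_of_mem_inter_right hx
  have heB : ∀ g ∈ L, Disjoint (e ∩ B) (g ∩ B) := fun g hg =>
    (heT.mono_right (inter_right_subset_treeCover hg)).mono_left inter_subset_left
  by_cases hfree : blockers B M e = ∅
  · rcases ht.cascade hE ha₀X hM he hea ha hfree heB with hdone | ⟨M', L', hM', ht', hprune⟩
    · exact .inl hdone
    · exact .inr ⟨M', L', hM', ht', hprune.potential_lt (by omega) (hlen hM ht)⟩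
  have ht' : IsAltTree a₀ A B E M (e :: L) :=
    .cons ht he heB (nonempty_iff_ne_empty.2 hfree)
      (hM.disjoint_blockerVerts_of_disjoint_treeCover heT) (hea ▸ singleton_subset_iff.2 ha)
  refine .inr ⟨M, e :: L, hM, ht', potential_cons_lt ?_ ?_⟩
  · have := hM.card_blockers_le.trans (hE.card_inter_right_le e he)
    show (blockers B M e).card + 1 < r + 2
    omega
  · simpa [blockerCounts] using hlen hM ht'

lemma IsMatchingOn.exists_insert (hE : IsBoundedBipartite A B E r)
    (hH : IsStrongHaxell A B E φ) (hφ : 2 * (r : ℝ) ^ 2 < φ) (ha₀ : a₀ ∈ A) (ha₀X : a₀ ∉ X)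
    (hM : IsMatchingOn A X E M) : ∃ M', IsMatchingOn A (insert a₀ X) E M' := by
  suffices ∀ n M L, IsMatchingOn A X E M → IsAltTree a₀ A B E M L →
      potential (r + 2) X.card (blockerCounts B M L) = n →
      ∃ M', IsMatchingOn A (insert a₀ X) E M' from this _ M [] hM .nil rfl
  intro n
  induction n using Nat.strong_induction_on with
  | _ n ih =>
  rintro M L hM ht rfl
  rcases ht.exists_matching_or_potential_lt hE hH hφ ha₀ ha₀X hM with
    hdone | ⟨M', L', hM', ht', hlt⟩
  · exact hdone
  · exact ih _ hlt M' L' hM' ht' rfl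

lemma exists_isMatchingOn (hE : IsBoundedBipartite A B E r) (hH : IsStrongHaxell A B E φ)
    (hφ : 2 * (r : ℝ) ^ 2 < φ) (hX : X ⊆ A) : ∃ M, IsMatchingOn A X E M := by
  induction X using Finset.induction_on with
  | empty => exact ⟨∅, empty_subset E, by simp, by simp, by simp⟩
  | insert a X haX ih =>
    obtain ⟨M, hM⟩ := ih ((subset_insert a X).trans hX)
    exact hM.exists_insert hE hH hφ (hX (mem_insert_self a X)) haX

end Augmentation

end HaxellMatching

theorem stmt_13_general {V : Type*} [DecidableEq V] (A B : Finset V)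
    (E : Finset (Finset V)) (r : ℕ) (φ : ℝ) (hφ : 2 * (r : ℝ) ^ 2 < φ)
    (hedge : ∀ e ∈ E, e ⊆ A ∪ B ∧ (e ∩ A).card = 1 ∧
      1 ≤ (e ∩ B).card ∧ (e ∩ B).card ≤ r)
    (hHaxell : ∀ S ⊆ A, ∀ T ⊆ B,
      (∀ e ∈ E, (e ∩ S).Nonempty → (e ∩ T).Nonempty) →
      φ * (S.card : ℝ) ≤ (T.card : ℝ)) :
    ∃ M ⊆ E, (∀ f ∈ M, ∀ g ∈ M, f ≠ g → Disjoint f g) ∧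
      ∀ a ∈ A, ∃ e ∈ M, a ∈ e := by
  have hE : HaxellMatching.IsBoundedBipartite A B E r :=
    ⟨fun e he => (hedge e he).1, fun e he => (hedge e he).2.1, fun e he => (hedge e he).2.2.2⟩
  obtain ⟨M, hM⟩ := HaxellMatching.exists_isMatchingOn hE hHaxell hφ subset_rfl
  refine ⟨M, hM.subset, fun f hf g hg hfg => hM.pairwiseDisjoint hf hg hfg, fun a ha => ?_⟩
  obtain ⟨m, hm, ham⟩ := hM.covers a ha
  exact ⟨m, hm, mem_of_mem_inter_left ham⟩

/-- An `r`-bounded bipartite hypergraph satisfying the `φ`-strong Haxell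
condition with `φ > 2r²` has a perfect matching. -/
theorem stmt_13 {V : Type*} [DecidableEq V] (A B : Finset V) (hAB : Disjoint A B)
    (E : Finset (Finset V)) (r : ℕ) (φ : ℝ) (hφ : 2 * (r : ℝ) ^ 2 < φ)
    (hedge : ∀ e ∈ E, e ⊆ A ∪ B ∧ (e ∩ A).card = 1 ∧
      1 ≤ (e ∩ B).card ∧ (e ∩ B).card ≤ r)
    (hHaxell : ∀ S ⊆ A, ∀ T ⊆ B,
      (∀ e ∈ E, (e ∩ S).Nonempty → (e ∩ T).Nonempty) →
      φ * (S.card : ℝ) ≤ (T.card : ℝ)) :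
    ∃ M ⊆ E, (∀ f ∈ M, ∀ g ∈ M, f ≠ g → Disjoint f g) ∧
      ∀ a ∈ A, ∃ e ∈ M, a ∈ e :=
  stmt_13_general A B E r φ hφ hedge hHaxell
end
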